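/- arXiv:2502.01086 — 3 statements merged into one kernel-verified Lean document; each statement's English description precedes it below -/
import Mathlib

section
/- There exists a 4-coloring of {1,...,8m} (for any positive integer m) in which each color class has exactly 2m elements and which contains no rainbow 4-term arithmetic progression, namely the coloring given by repeating the block ABCC m times followed by the block DDAB m times. -/
inductive Color | A | B | C | D
  deriving DecidableEq

open Color

/-- A coloring `c` of `{1,...,n}` contains a rainbow 4-term AP. -/
def RainbowAP4 (n : ℕ) (c : ℕ → Color) : Prop :=
  ∃ t d : ℕ, 1 ≤ t ∧ 1 ≤ d ∧ t + 3*d ≤ n ∧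
    c t ≠ c (t+d) ∧ c t ≠ c (t+2*d) ∧ c t ≠ c (t+3*d) ∧
    c (t+d) ≠ c (t+2*d) ∧ c (t+d) ≠ c (t+3*d) ∧ c (t+2*d) ≠ c (t+3*d)

/-- The coloring for STATEMENT 0. -/
def col (m i : ℕ) : Color :=
  if i ≤ 4*m then (if i % 4 = 1 then A else if i % 4 = 2 then B else C) else (if i % 4 = 1 ∨ i % 4 = 2 then D else if i % 4 = 3 then A else B)

def g1 (r : ℕ) : Color := if r = 1 then A else if r = 2 then B else C
def g2 (r : ℕ) : Color := if r = 1 ∨ r = 2 then D else if r = 3 then A else B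

lemma col_key (m i : ℕ) : col m i = if i ≤ 4*m then g1 (i % 4) else g2 (i % 4) := rfl

def c1 : Color → ℕ | A => 1 | B => 1 | C => 2 | D => 0
def c2 : Color → ℕ | A => 1 | B => 1 | C => 0 | D => 2

lemma block1 (m k : ℕ) (x : Color) (hk : k < m) :
    ((Finset.Icc (4*k+1) (4*k+4)).filter (fun i => col m i = x)).card = c1 x := by
  have hset : Finset.Icc (4*k+1) (4*k+4) = {4*k+1, 4*k+2, 4*k+3, 4*k+4} := by
    ext i; simp [Finset.mem_Icc, Finset.mem_insert]; omega
  have v1 : col m (4*k+1) = A := by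
    rw [col_key, if_pos (by omega : 4*k+1 ≤ 4*m), show (4*k+1) % 4 = 1 by omega]; rfl
  have v2 : col m (4*k+2) = B := by
    rw [col_key, if_pos (by omega : 4*k+2 ≤ 4*m), show (4*k+2) % 4 = 2 by omega]; rfl
  have v3 : col m (4*k+3) = C := by
    rw [col_key, if_pos (by omega : 4*k+3 ≤ 4*m), show (4*k+3) % 4 = 3 by omega]; rfl
  have v4 : col m (4*k+4) = C := by
    rw [col_key, if_pos (by omega : 4*k+4 ≤ 4*m), show (4*k+4) % 4 = 0 by omega]; rfl
  rw [hset]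
  rcases x <;>
    simp [Finset.filter_insert, Finset.filter_singleton, v1, v2, v3, v4, c1]

lemma block2 (m k : ℕ) (x : Color) (hk : m ≤ k) :
    ((Finset.Icc (4*k+1) (4*k+4)).filter (fun i => col m i = x)).card = c2 x := by
  have hset : Finset.Icc (4*k+1) (4*k+4) = {4*k+1, 4*k+2, 4*k+3, 4*k+4} := by
    ext i; simp [Finset.mem_Icc, Finset.mem_insert]; omega
  have v1 : col m (4*k+1) = D := by
    rw [col_key, if_neg (by omega : ¬ 4*k+1 ≤ 4*m), show (4*k+1) % 4 = 1 by omega]; rfl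
  have v2 : col m (4*k+2) = D := by
    rw [col_key, if_neg (by omega : ¬ 4*k+2 ≤ 4*m), show (4*k+2) % 4 = 2 by omega]; rfl
  have v3 : col m (4*k+3) = A := by
    rw [col_key, if_neg (by omega : ¬ 4*k+3 ≤ 4*m), show (4*k+3) % 4 = 3 by omega]; rfl
  have v4 : col m (4*k+4) = B := by
    rw [col_key, if_neg (by omega : ¬ 4*k+4 ≤ 4*m), show (4*k+4) % 4 = 0 by omega]; rfl
  rw [hset]
  rcases x <;>
    simp [Finset.filter_insert, Finset.filter_singleton, v1, v2, v3, v4, c2]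

lemma cum (m : ℕ) (x : Color) : ∀ j, j ≤ 2*m →
    ((Finset.Icc 1 (4*j)).filter (fun i => col m i = x)).card
      = c1 x * min j m + c2 x * (j - min j m) := by
  intro j
  induction j with
  | zero => simp
  | succ j ih =>
    intro hj
    have hsplit : Finset.Icc 1 (4*(j+1)) = Finset.Icc 1 (4*j) ∪ Finset.Icc (4*j+1) (4*j+4) := by
      ext i; simp only [Finset.mem_Icc, Finset.mem_union]; omega
    have hdisj : Disjoint (Finset.Icc 1 (4*j)) (Finset.Icc (4*j+1) (4*j+4)) := by
      simp only [Finset.disjoint_left, Finset.mem_Icc]; omega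
    rw [hsplit, Finset.filter_union,
      Finset.card_union_of_disjoint (Finset.disjoint_filter_filter hdisj)]
    rw [ih (by omega)]
    rcases Nat.lt_or_ge j m with hjm | hjm
    · rw [block1 m j x hjm]
      rcases x <;> simp only [c1, c2] <;> omega
    · rw [block2 m j x hjm]
      rcases x <;> simp only [c1, c2] <;> omega

set_option maxHeartbeats 2000000 in
theorem stmt_0 (m : ℕ) (hm : 0 < m) :
    (∀ x : Color, ((Finset.Icc 1 (8*m)).filter (fun i => col m i = x)).card = 2*m) ∧ ¬ RainbowAP4 (8*m) (col m) := by
  constructor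
  · intro x
    have h := cum m x (2*m) le_rfl
    rw [show 4*(2*m) = 8*m by ring] at h
    rw [h]
    rcases x <;> simp only [c1, c2] <;> omega
  · rintro ⟨t, d, ht, hd, hle, h01, h02, h03, h12, h13, h23⟩
    simp only [col_key] at h01 h02 h03 h12 h13 h23
    have e1 : (t + d) % 4 = (t % 4 + d % 4) % 4 := by omega
    have e2 : (t + 2*d) % 4 = (t % 4 + 2*(d % 4)) % 4 := by omega
    have e3 : (t + 3*d) % 4 = (t % 4 + 3*(d % 4)) % 4 := by omega
    simp only [e1, e2, e3] at h01 h02 h03 h12 h13 h23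
    rcases show t % 4 = 0 ∨ t % 4 = 1 ∨ t % 4 = 2 ∨ t % 4 = 3 by omega with h | h | h | h <;>
      rcases show d % 4 = 0 ∨ d % 4 = 1 ∨ d % 4 = 2 ∨ d % 4 = 3 by omega with h' | h' | h' | h' <;>
      simp only [h, h'] at h01 h02 h03 h12 h13 h23 <;>
      norm_num at h01 h02 h03 h12 h13 h23 <;>
      split_ifs at h01 h02 h03 h12 h13 h23 <;>
      first
        | exact h01 rfl
        | exact h02 rfl
        | exact h03 rfl
        | exact h12 rfl
        | exact h13 rfl
        | exact h23 rfl
        | omega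
end

section
/- Every 4-coloring of Z_8 in which each color class has exactly 2 elements contains a rainbow 4-term arithmetic progression, i.e., there exist x ∈ Z_8 and d ∈ Z_8 with d ≠ 0 such that x, x+d, x+2d, x+3d are four distinct elements of Z_8 receiving four distinct colors. -/
open Color

/-- The four terms `x, x+d, x+2d, x+3d` are pairwise distinct in `ZMod 8`. -/
def Distinct4 (x d : ZMod 8) : Prop :=
  x ≠ x + d ∧ x ≠ x + 2*d ∧ x ≠ x + 3*d ∧
  x + d ≠ x + 2*d ∧ x + d ≠ x + 3*d ∧ x + 2*d ≠ x + 3*d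

/-- The colors of `x, x+d, x+2d, x+3d` are pairwise distinct. -/
def RainbowColors (c : ZMod 8 → Color) (x d : ZMod 8) : Prop :=
  c x ≠ c (x + d) ∧ c x ≠ c (x + 2*d) ∧ c x ≠ c (x + 3*d) ∧
  c (x + d) ≠ c (x + 2*d) ∧ c (x + d) ≠ c (x + 3*d) ∧ c (x + 2*d) ≠ c (x + 3*d)

/-! Permuting the colors preserves the hypothesis and can only destroy rainbow progressions, so
we may assume that `0` has color `A`. The remaining `4 ^ 7` colorings are checked by evaluation. -/

instance : Fintype Color := ⟨⟨↑[A, B, C, D], by decide⟩, fun x => by cases x <;> decide⟩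

instance (x d : ZMod 8) : Decidable (Distinct4 x d) := by
  unfold Distinct4; infer_instance

instance (c : ZMod 8 → Color) (x d : ZMod 8) : Decidable (RainbowColors c x d) := by
  unfold RainbowColors; infer_instance

theorem RainbowColors.of_comp {f : Color → Color} {c : ZMod 8 → Color} {x d : ZMod 8}
    (h : RainbowColors (f ∘ c) x d) : RainbowColors c x d := by
  obtain ⟨h₁, h₂, h₃, h₄, h₅, h₆⟩ := h
  exact ⟨ne_of_apply_ne f h₁, ne_of_apply_ne f h₂, ne_of_apply_ne f h₃,
    ne_of_apply_ne f h₄, ne_of_apply_ne f h₅, ne_of_apply_ne f h₆⟩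

theorem card_filter_equiv_apply_eq {α β γ : Type*} [Fintype α] [DecidableEq β] [DecidableEq γ]
    (e : β ≃ γ) (c : α → β) (y : γ) :
    (Finset.univ.filter fun i => e (c i) = y).card =
      (Finset.univ.filter fun i => c i = e.symm y).card := by
  simp only [← Equiv.eq_symm_apply]

theorem card_filter_eq_count (c : ZMod 8 → Color) (y : Color) :
    (Finset.univ.filter fun i => c i = y).card =
      [c 0, c 1, c 2, c 3, c 4, c 5, c 6, c 7].count y := by
  rw [Finset.card_filter]
  refine (Fin.sum_univ_eight fun i => if c i = y then 1 else 0).trans ?_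
  simp only [List.count_cons, List.count_nil, beq_iff_eq]
  omega

theorem exists_rainbow_of_count_eq_two : ∀ a₁ a₂ a₃ a₄ a₅ a₆ a₇ : Color,
    (∀ y, [A, a₁, a₂, a₃, a₄, a₅, a₆, a₇].count y = 2) →
      ∃ x d : ZMod 8, d ≠ 0 ∧ Distinct4 x d ∧
        RainbowColors (fun i => ![A, a₁, a₂, a₃, a₄, a₅, a₆, a₇] i) x d := by
  decide +kernel

theorem exists_rainbow_of_apply_zero {c : ZMod 8 → Color} (h₀ : c 0 = A)
    (hc : ∀ y, (Finset.univ.filter fun i => c i = y).card = 2) :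
    ∃ x d : ZMod 8, d ≠ 0 ∧ Distinct4 x d ∧ RainbowColors c x d := by
  have hcount : ∀ y, [A, c 1, c 2, c 3, c 4, c 5, c 6, c 7].count y = 2 := fun y => by
    rw [← h₀, ← card_filter_eq_count, hc]
  have hc_eq : (fun i => ![A, c 1, c 2, c 3, c 4, c 5, c 6, c 7] i) = c := by
    funext i; fin_cases i; exacts [h₀.symm, rfl, rfl, rfl, rfl, rfl, rfl, rfl]
  simpa only [hc_eq] using exists_rainbow_of_count_eq_two _ _ _ _ _ _ _ hcount

theorem stmt_13 (c : ZMod 8 → Color)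
    (hc : ∀ x : Color, (Finset.univ.filter (fun i : ZMod 8 => c i = x)).card = 2) :
    ∃ x d : ZMod 8, d ≠ 0 ∧ Distinct4 x d ∧ RainbowColors c x d := by
  let σ := Equiv.swap A (c 0)
  have hσc : ∀ y, (Finset.univ.filter fun i => (σ ∘ c) i = y).card = 2 := fun y =>
    (card_filter_equiv_apply_eq σ c y).trans (hc _)
  obtain ⟨x, d, hd, hxd, hrainbow⟩ :=
    exists_rainbow_of_apply_zero (c := σ ∘ c) (Equiv.swap_apply_right _ _) hσc
  exact ⟨x, d, hd, hxd, hrainbow.of_comp⟩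
end

section
/- The coloring ν = (A,B,C,C,D,D,A,B) of {1,...,8} (i.e., ν(1)=A, ν(2)=B, ν(3)=ν(4)=C, ν(5)=ν(6)=D, ν(7)=A, ν(8)=B) is an equinumerous 4-coloring of [8] with no rainbow 4-term arithmetic progression inside [8], but when viewed as a coloring of Z_8 it does contain a rainbow AP(4) (one with wrap-around). -/
open Color

def nu (i : ℕ) : Color :=
  if i = 1 then A else if i = 2 then B else if i = 3 ∨ i = 4 then C
  else if i = 5 ∨ i = 6 then D else if i = 7 then A else B

def nuZ (x : ZMod 8) : Color :=
  nu (if x.val = 0 then 8 else x.val)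

theorem stmt_14 :
    (∀ x : Color, ((Finset.Icc 1 8).filter (fun i => nu i = x)).card = 2) ∧
    ¬ RainbowAP4 8 nu ∧
    (∃ x d : ZMod 8, d ≠ 0 ∧
      (x ≠ x + d ∧ x ≠ x + 2*d ∧ x ≠ x + 3*d ∧
       x + d ≠ x + 2*d ∧ x + d ≠ x + 3*d ∧ x + 2*d ≠ x + 3*d) ∧
      (nuZ x ≠ nuZ (x + d) ∧ nuZ x ≠ nuZ (x + 2*d) ∧ nuZ x ≠ nuZ (x + 3*d) ∧
       nuZ (x + d) ≠ nuZ (x + 2*d) ∧ nuZ (x + d) ≠ nuZ (x + 3*d) ∧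
       nuZ (x + 2*d) ≠ nuZ (x + 3*d))) := by
  refine ⟨fun x => by cases x <;> decide, ?_, ⟨4, 3, by decide⟩⟩
  rintro ⟨t, d, ht, hd, hle, h⟩
  have hd2 : d ≤ 2 := by omega
  have ht5 : t ≤ 5 := by omega
  interval_cases d <;> interval_cases t <;> first | omega | (revert h; decide)
end
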